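/- (Corollary 4, rank form.) Suppose Γ is self-dual, and define f(X) = rk(M_X) + rk(M_{P∖X}) for X ⊆ P, with rk the rank over F_q. Then: (1) for every unauthorized set A ∉ Γ there exists a maximal unauthorized set B (i.e. B ∉ Γ and B ∪ {p} ∈ Γ for every p ∈ P∖B) with A ⊆ B and f(A) ≤ f(B); and (2) every authorized set B ∈ Γ contains a minimal authorized set A ∈ Γ_min with f(B) ≤ f(A). Thus among unauthorized sets the maximal unauthorized sets have maximal f (hence maximal entropy), and among authorized sets the minimal authorized sets have maximal f (hence maximal entropy). -/

import Mathlib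

/-!
Normal-form monotone span programs (Smith's construction for quantum secret sharing).

Players are `Fin n`.  The minimal authorized sets are `A 0, …, A (k-1)`,
distinct nonempty subsets forming an antichain whose union is all of `Fin n`.
`enum i` fixes an enumeration of the elements of `A i`; the last element
`enum i ⟨card - 1⟩` plays the role of the distinguished participant of block `i`.
-/

/-- The combinatorial data of a normal-form monotone span program. -/
structure MSP (n k : ℕ) where
  /-- the minimal authorized sets -/
  A : Fin k → Finset (Fin n)
  nonempty : ∀ i, (A i).Nonempty
  /-- antichain (this also forces the `A i` to be pairwise distinct) -/
  antichain : ∀ i j : Fin k, i ≠ j → ¬ A i ⊆ A j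
  /-- every player occurs in some minimal authorized set -/
  cover : ∀ p : Fin n, ∃ i, p ∈ A i
  /-- a fixed enumeration `p_{i,1}, …, p_{i,|A_i|}` of each `A i` -/
  enum : ∀ i, Fin ((A i).card) ≃ {p : Fin n // p ∈ A i}

namespace MSP

variable {n k : ℕ}

/-- Row indices of the span matrix: block `i` has `|A i|` rows. -/
abbrev Rows (S : MSP n k) := (i : Fin k) × Fin ((S.A i).card)

/-- Column indices: the first column (`none`) together with the blocks
`C i` of `r_i = |A i| - 1` columns (`some ⟨i, j⟩`). -/
abbrev Cols (S : MSP n k) := Option ((i : Fin k) × Fin ((S.A i).card - 1))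

/-- The player labelling the rows (the map `ψ`). -/
def label (S : MSP n k) (r : S.Rows) : Fin n := (S.enum r.1 r.2 : Fin n)

/-- The normal-form span matrix `M`.  In block `i`, row `j` with
`j < |A i| - 1` is the `j`-th identity row (a single `1` in column
`some ⟨i, j⟩`), and the last row (`j = |A i| - 1`) is
`(1, 0, …, 0, -1, …, -1)`: a `1` in column `none` and `-1` in every
column of block `i`. -/
def M (F : Type*) [Field F] (S : MSP n k) : Matrix S.Rows S.Cols F :=
  Matrix.of fun r c =>
    match c with
    | none => if (r.2 : ℕ) = (S.A r.1).card - 1 then 1 else 0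
    | some ⟨i, j⟩ =>
        if i = r.1 then
          (if (r.2 : ℕ) = (S.A r.1).card - 1 then -1
           else if (j : ℕ) = (r.2 : ℕ) then 1 else 0)
        else 0

/-- The submatrix `M_B` of `M` consisting of all rows labelled by players in `B`. -/
def MSub (F : Type*) [Field F] (S : MSP n k) (B : Finset (Fin n)) :
    Matrix {r : S.Rows // S.label r ∈ B} S.Cols F :=
  Matrix.of fun r c => M F S r.1 c

/-- The vector `ε₁ = (1, 0, …, 0)`. -/
def eps1 (F : Type*) [Field F] (S : MSP n k) : S.Cols → F :=
  fun c => match c with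
  | none => 1
  | some _ => 0

/-- The access structure computed by the program:
`B` is authorized iff it contains some minimal authorized set. -/
def auth (S : MSP n k) (B : Finset (Fin n)) : Prop := ∃ i, S.A i ⊆ B

/-- Self-duality of the access structure. -/
def selfDual (S : MSP n k) : Prop :=
  ∀ X : Finset (Fin n), S.auth X ↔ ¬ S.auth (Finset.univ \ X)

end MSP

open MSP

/-- `f(X) = rk(M_X) + rk(M_{P∖X})`, the rank functional governing the entropy
of the normal-form secret sharing state. -/
noncomputable def MSP.rkPair (F : Type*) [Field F] {n k : ℕ} (S : MSP n k) (X : Finset (Fin n)) : ℕ :=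
  (MSub F S X).rank + (MSub F S (Finset.univ \ X)).rank

/-!
If `X` is unauthorized, every block of `M` has a row outside `M_X`. A linear relation among the
rows of `M` has equal coefficients on all rows of a block (column `(i, j)` of `M` is the difference
of the indicator vectors of row `j` and of the last row of block `i`), so a relation among the rows
of `M_X` is trivial and `rk M_X` is the number of rows labelled in `X`. Since adding rows raises
the rank by at most their number, `f` increases along unauthorized sets `X ⊆ Y`. For (2), note
`f(X) = f(P ∖ X)` and that, by self-duality, the complements `P ∖ B ⊆ P ∖ A_i` are unauthorized.
-/

open Finset Matrix Module Submodule

section RankBounds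

variable {F : Type*} [Field F] {m n : Type*}

theorem LinearIndepOn.of_vecMul_eq_zero [Fintype m] {A : Matrix m n F} {s : Set m}
    (h : ∀ g : m → F, (∀ i ∉ s, g i = 0) → g ᵥ* A = 0 → g = 0) :
    LinearIndepOn F A.row s := by
  rw [linearIndepOn_iff]
  intro l hl hl0
  ext i
  refine congrFun (h l (Finsupp.mem_supported' F l |>.1 hl) ?_) i
  rw [Finsupp.linearCombination_apply,
    Finsupp.sum_fintype _ _ fun _ => zero_smul F (A.row _)] at hl0
  rwa [vecMul_eq_sum]

theorem Matrix.rank_submatrix_le_rank_submatrix_add_card [Fintype n] (A : Matrix m n F)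
    {p q d : m → Prop} [Fintype {i // p i}] [Fintype {i // q i}] [Fintype {i // d i}]
    (h : ∀ i, q i → p i ∨ d i) :
    (A.submatrix (Subtype.val : {i // q i} → m) id).rank ≤
      (A.submatrix (Subtype.val : {i // p i} → m) id).rank + Fintype.card {i // d i} := by
  simp only [rank_eq_finrank_span_row]
  calc _ ≤ finrank F (span F (Set.range (A.submatrix (Subtype.val : {i // p i} → m) id).row) ⊔
          span F (Set.range (A.submatrix (Subtype.val : {i // d i} → m) id).row) :
          Submodule F (n → F)) := by
        refine Submodule.finrank_mono (span_le.2 ?_)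
        rintro _ ⟨⟨i, hi⟩, rfl⟩
        rcases h i hi with hp | hd
        · exact mem_sup_left (subset_span ⟨⟨i, hp⟩, rfl⟩)
        · exact mem_sup_right (subset_span ⟨⟨i, hd⟩, rfl⟩)
    _ ≤ _ := Submodule.finrank_add_le_finrank_add_finrank _ _
    _ ≤ _ := Nat.add_le_add_left (finrank_range_le_card _) _

end RankBounds

namespace MSP

variable {F : Type*} [Field F] {n k : ℕ} (S : MSP n k)

def lastRow (i : Fin k) : Fin (S.A i).card :=
  ⟨(S.A i).card - 1, Nat.sub_one_lt_of_lt (Finset.card_pos.2 (S.nonempty i))⟩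

lemma M_apply_some (r : S.Rows) (i : Fin k) (j : Fin ((S.A i).card - 1)) :
    M F S r (some ⟨i, j⟩) =
      (Pi.single ⟨i, Fin.castLE (Nat.sub_le _ 1) j⟩ 1 - Pi.single ⟨i, S.lastRow i⟩ 1 :
        S.Rows → F) r := by
  obtain ⟨i', j'⟩ := r
  by_cases hi : i = i'
  · subst hi
    have hj := j.2
    simp only [M, Matrix.of_apply, Pi.sub_apply, Pi.single_apply, Sigma.mk.inj_iff, heq_iff_eq,
      true_and, Fin.ext_iff, Fin.val_castLE, lastRow]
    split_ifs <;> first | omega | simp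
  · simp [M, hi, Ne.symm hi]

lemma vecMul_M_some (g : S.Rows → F) (i : Fin k) (j : Fin ((S.A i).card - 1)) :
    (g ᵥ* M F S) (some ⟨i, j⟩) = g ⟨i, Fin.castLE (Nat.sub_le _ 1) j⟩ - g ⟨i, S.lastRow i⟩ := by
  simp only [vecMul, funext (M_apply_some S · i j), dotProduct_sub, dotProduct_single, mul_one]

lemma eq_lastRow_of_vecMul_M_eq_zero {g : S.Rows → F} (hg : g ᵥ* M F S = 0) (i : Fin k)
    (j : Fin (S.A i).card) : g ⟨i, j⟩ = g ⟨i, S.lastRow i⟩ := by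
  obtain hj | hj := (Nat.le_sub_one_of_lt j.2).lt_or_eq
  · simpa [vecMul_M_some, sub_eq_zero] using congrFun hg (some ⟨i, ⟨j, hj⟩⟩)
  · rw [show j = S.lastRow i from Fin.ext hj]

lemma eq_zero_of_vecMul_M_eq_zero {X : Finset (Fin n)} (hX : ¬ S.auth X) {g : S.Rows → F}
    (hgX : ∀ r, S.label r ∉ X → g r = 0) (hg : g ᵥ* M F S = 0) : g = 0 := by
  funext ⟨i, j⟩
  obtain ⟨p, hpA, hpX⟩ := Finset.not_subset.1 fun h => hX ⟨i, h⟩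
  have hp : g ⟨i, (S.enum i).symm ⟨p, hpA⟩⟩ = 0 := hgX _ (by simpa [label] using hpX)
  rw [S.eq_lastRow_of_vecMul_M_eq_zero hg, ← S.eq_lastRow_of_vecMul_M_eq_zero hg, hp,
    Pi.zero_apply]

def numRows (X : Finset (Fin n)) : ℕ := Fintype.card {r : S.Rows // S.label r ∈ X}

lemma numRows_add_numRows_sdiff {X Y : Finset (Fin n)} (hXY : X ⊆ Y) :
    S.numRows X + S.numRows (Y \ X) = S.numRows Y := by
  rw [numRows, numRows, ← Fintype.card_subtype_or_disjoint _ _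
    (Pi.disjoint_iff.2 fun r => Prop.disjoint_iff.2 fun h => (Finset.mem_sdiff.1 h.2).2 h.1)]
  exact Fintype.card_congr (Equiv.subtypeEquivRight fun r => by grind)

lemma MSub_eq_submatrix (X : Finset (Fin n)) :
    MSub F S X = (M F S).submatrix Subtype.val id := rfl

lemma rank_MSub_of_not_auth {X : Finset (Fin n)} (hX : ¬ S.auth X) :
    (MSub F S X).rank = S.numRows X :=
  LinearIndependent.rank_matrix <| LinearIndepOn.of_vecMul_eq_zero (s := {r | S.label r ∈ X})
    fun _ hgX hg => S.eq_zero_of_vecMul_M_eq_zero hX hgX hg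

lemma rank_MSub_le_rank_MSub_add_numRows (X Y : Finset (Fin n)) :
    (MSub F S Y).rank ≤ (MSub F S X).rank + S.numRows (Y \ X) := by
  rw [MSub_eq_submatrix, MSub_eq_submatrix]
  exact (M F S).rank_submatrix_le_rank_submatrix_add_card fun r hY =>
    (em _).imp_right fun hX => Finset.mem_sdiff.2 ⟨hY, hX⟩

lemma rkPair_univ_sdiff (X : Finset (Fin n)) : S.rkPair F (univ \ X) = S.rkPair F X := by
  rw [rkPair, rkPair, sdiff_sdiff_right_self, inf_eq_right.2 (subset_univ X), add_comm]

lemma rkPair_le_rkPair_of_subset {X Y : Finset (Fin n)} (hXY : X ⊆ Y) (hY : ¬ S.auth Y) :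
    S.rkPair F X ≤ S.rkPair F Y := by
  have hX : ¬ S.auth X := fun ⟨i, hi⟩ => hY ⟨i, hi.trans hXY⟩
  have hsdiff : (univ \ X) \ (univ \ Y) = Y \ X := by ext; simp [and_comm]
  calc S.rkPair F X = S.numRows X + (MSub F S (univ \ X)).rank := by
        rw [rkPair, S.rank_MSub_of_not_auth hX]
    _ ≤ S.numRows X + ((MSub F S (univ \ Y)).rank + S.numRows (Y \ X)) := by
        grw [← hsdiff, S.rank_MSub_le_rank_MSub_add_numRows (univ \ Y) (univ \ X)]
    _ = S.rkPair F Y := by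
        rw [rkPair, S.rank_MSub_of_not_auth hY, ← S.numRows_add_numRows_sdiff hXY]
        ring

lemma exists_maximal_not_auth {A : Finset (Fin n)} (hA : ¬ S.auth A) :
    ∃ B, A ⊆ B ∧ ¬ S.auth B ∧ ∀ p ∉ B, S.auth (insert p B) := by
  obtain ⟨B, hAB, hB⟩ := Finite.exists_le_maximal (p := fun B => ¬ S.auth B) hA
  exact ⟨B, hAB, hB.1, fun p hp => by_contra fun h =>
    hp (hB.2 h (subset_insert p B) (mem_insert_self p B))⟩

end MSP

theorem extremal_sets_maximal_entropy_general {F : Type*} [Field F] {n k : ℕ}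
    (S : MSP n k) (hsd : S.selfDual) :
    (∀ A : Finset (Fin n), ¬ S.auth A →
      ∃ B : Finset (Fin n), ¬ S.auth B ∧ (∀ p : Fin n, p ∉ B → S.auth (insert p B)) ∧
        A ⊆ B ∧ S.rkPair F A ≤ S.rkPair F B) ∧
    (∀ B : Finset (Fin n), S.auth B →
      ∃ i : Fin k, S.A i ⊆ B ∧ S.rkPair F B ≤ S.rkPair F (S.A i)) := by
  refine ⟨fun A hA => ?_, fun B ⟨i, hi⟩ => ⟨i, hi, ?_⟩⟩
  · obtain ⟨B, hAB, hB, hmax⟩ := S.exists_maximal_not_auth hA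
    exact ⟨B, hB, hmax, hAB, S.rkPair_le_rkPair_of_subset hAB hB⟩
  · rw [← S.rkPair_univ_sdiff B, ← S.rkPair_univ_sdiff (S.A i)]
    exact S.rkPair_le_rkPair_of_subset (sdiff_subset_sdiff le_rfl hi) ((hsd _).1 ⟨i, subset_rfl⟩)

/-- Corollary 4, rank form.  Suppose `Γ` is self-dual and let
`f(X) = rk(M_X) + rk(M_{P∖X})`.  Then (1) every unauthorized set `A` is
contained in a maximal unauthorized set `B` with `f(A) ≤ f(B)`, and (2) every
authorized set `B` contains a minimal authorized set `A i` with `f(B) ≤ f(A i)`: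
among unauthorized sets the maximal ones have maximal `f` (hence maximal
entropy), and among authorized sets the minimal ones have maximal `f` (hence
maximal entropy). -/
theorem extremal_sets_maximal_entropy {F : Type*} [Field F] [Fintype F] {n k : ℕ}
    (S : MSP n k) (hsd : S.selfDual) :
    (∀ A : Finset (Fin n), ¬ S.auth A →
      ∃ B : Finset (Fin n), ¬ S.auth B ∧ (∀ p : Fin n, p ∉ B → S.auth (insert p B)) ∧
        A ⊆ B ∧ S.rkPair F A ≤ S.rkPair F B) ∧
    (∀ B : Finset (Fin n), S.auth B →
      ∃ i : Fin k, S.A i ⊆ B ∧ S.rkPair F B ≤ S.rkPair F (S.A i)) :=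
  extremal_sets_maximal_entropy_general S hsd
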